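/- arXiv:1801.09843 — 3 statements merged into one kernel-verified Lean document; each statement's English description precedes it below -/
import Mathlib

section
/- If K ∈ H¹(ℝ), then the linear operator B₄ on L²(ℝ) defined by (B₄u)(x) = ∫_ℝ (K(x-x') - K(-x'))/x · u(x') dx' is bounded, with operator norm at most 2√2·‖K‖_{H¹}, where ‖K‖_{H¹}² = ‖K‖_{L²}² + ‖D¹K‖_{L²}². -/
/-!
Write `C x = ∫ K (x - y) u y dy`, so that `B₄ u` is the slope of `C` at `0`. Cauchy–Schwarz gives
`|C| ≤ ‖K‖ ‖u‖`, and expressing `K (x - y) - K (z - y)` as an integral of `K'` and exchanging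
the two integrals gives `|C x - C z| ≤ ‖K'‖ ‖u‖ |x - z|`. Hence
`|B₄ u x| ≤ min (‖K'‖ ‖u‖) (2 ‖K‖ ‖u‖ / |x|)`, and the square of the right-hand side integrates
to `8 ‖K‖ ‖K'‖ ‖u‖² ≤ 8 (‖K‖² + ‖K'‖²) ‖u‖²`.
-/

open MeasureTheory Set

section L2

variable {α : Type*} [MeasurableSpace α] {μ : Measure α} {f g : α → ℝ}

lemma integral_norm_mul_le_eLpNorm_two_mul (hf : MemLp f 2 μ) (hg : MemLp g 2 μ) :
    ∫ x, ‖f x * g x‖ ∂μ ≤ (eLpNorm f 2 μ).toReal * (eLpNorm g 2 μ).toReal := by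
  have hfg : eLpNorm (fun x => f x * g x) 1 μ ≤ eLpNorm f 2 μ * eLpNorm g 2 μ := by
    simpa using eLpNorm_le_eLpNorm_mul_eLpNorm'_of_norm (p := 2) (q := 2) (r := 1) hf.1 hg.1
      (· * ·) 1 (.of_forall fun x => by simp)
  have hint : Integrable (fun x => f x * g x) μ := hf.integrable_mul hg
  rw [← ENNReal.toReal_mul, ← ENNReal.toReal_ofReal (integral_nonneg fun _ => norm_nonneg _),
    ofReal_integral_norm_eq_lintegral_enorm hint, ← eLpNorm_one_eq_lintegral_enorm]
  exact ENNReal.toReal_mono (ENNReal.mul_ne_top hf.2.ne hg.2.ne) hfg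

lemma MeasureTheory.MemLp.eLpNorm_two_eq_ofReal_sqrt_integral_sq (hf : MemLp f 2 μ) :
    eLpNorm f 2 μ = ENNReal.ofReal √(∫ x, f x ^ 2 ∂μ) := by
  rw [hf.eLpNorm_eq_integral_rpow_norm two_ne_zero ENNReal.ofNat_ne_top, Real.sqrt_eq_rpow]
  norm_num

end L2

section Translate

variable {G : Type*} [MeasurableSpace G] [AddGroup G] [MeasurableAdd G] [MeasurableNeg G]
  {μ : Measure G} [μ.IsAddLeftInvariant] [μ.IsNegInvariant] {φ ψ : G → ℝ}

lemma MeasureTheory.MemLp.comp_sub_left {p : ENNReal} (hφ : MemLp φ p μ) (c : G) :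
    MemLp (fun y => φ (c - y)) p μ :=
  hφ.comp_measurePreserving (Measure.measurePreserving_sub_left μ c)

lemma eLpNorm_comp_sub_left {p : ENNReal} (hφ : AEStronglyMeasurable φ μ) (c : G) :
    eLpNorm (fun y => φ (c - y)) p μ = eLpNorm φ p μ :=
  eLpNorm_comp_measurePreserving hφ (Measure.measurePreserving_sub_left μ c)

lemma integral_norm_comp_sub_mul_le (hφ : MemLp φ 2 μ) (hψ : MemLp ψ 2 μ) (c : G) :
    ∫ y, ‖φ (c - y) * ψ y‖ ∂μ ≤ (eLpNorm φ 2 μ).toReal * (eLpNorm ψ 2 μ).toReal := by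
  simpa only [eLpNorm_comp_sub_left hφ.1] using
    integral_norm_mul_le_eLpNorm_two_mul (hφ.comp_sub_left c) hψ

lemma abs_integral_comp_sub_mul_le (hφ : MemLp φ 2 μ) (hψ : MemLp ψ 2 μ) (c : G) :
    |∫ y, φ (c - y) * ψ y ∂μ| ≤ (eLpNorm φ 2 μ).toReal * (eLpNorm ψ 2 μ).toReal :=
  (norm_integral_le_integral_norm _).trans (integral_norm_comp_sub_mul_le hφ hψ c)

lemma integrable_comp_sub_mul_restrict_prod [MeasurableAdd₂ G] [SFinite μ]
    [μ.IsAddRightInvariant] (hφ : MemLp φ 2 μ) (hψ : MemLp ψ 2 μ) {s : Set G} (hs : μ s ≠ ⊤) :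
    Integrable (fun p : G × G => φ (p.1 - p.2) * ψ p.2) ((μ.restrict s).prod μ) := by
  have hmeas :
      AEStronglyMeasurable (fun p : G × G => φ (p.1 - p.2) * ψ p.2) ((μ.restrict s).prod μ) := by
    rw [Measure.restrict_prod_eq_prod_univ]
    exact ((hφ.1.comp_quasiMeasurePreserving
      (quasiMeasurePreserving_sub_of_right_invariant μ μ)).mul hψ.1.comp_snd).restrict
  rw [integrable_prod_iff hmeas]
  refine ⟨.of_forall fun c => (hφ.comp_sub_left c).integrable_mul hψ, ?_⟩
  refine (integrableOn_const (C := (eLpNorm φ 2 μ).toReal * (eLpNorm ψ 2 μ).toReal) hs).mono'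
    hmeas.norm.integral_prod_right' (.of_forall fun c => ?_)
  rw [Real.norm_of_nonneg (integral_nonneg fun _ => norm_nonneg _)]
  exact integral_norm_comp_sub_mul_le hφ hψ c

end Translate

lemma abs_integral_comp_sub_mul_sub_le {φ φ' ψ : ℝ → ℝ} (hφ : MemLp φ 2 volume)
    (hφ' : MemLp φ' 2 volume) (hψ : MemLp ψ 2 volume)
    (hφφ' : ∀ a b, φ b - φ a = ∫ t in a..b, φ' t) (x z : ℝ) :
    |(∫ y, φ (x - y) * ψ y) - ∫ y, φ (z - y) * ψ y|
      ≤ (eLpNorm φ' 2 volume).toReal * (eLpNorm ψ 2 volume).toReal * |x - z| := by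
  have hswap : (∫ y, φ (x - y) * ψ y) - ∫ y, φ (z - y) * ψ y
      = ∫ s in z..x, ∫ y, φ' (s - y) * ψ y := by
    have hint : ∀ c, Integrable (fun y => φ (c - y) * ψ y) :=
      fun c => (hφ.comp_sub_left c).integrable_mul hψ
    rw [← integral_sub (hint x) (hint z),
      intervalIntegral_integral_swap (integrable_comp_sub_mul_restrict_prod hφ' hψ (by simp))]
    refine integral_congr_ae (.of_forall fun y => ?_)
    dsimp only
    rw [← sub_mul, hφφ', intervalIntegral.integral_mul_const,
      intervalIntegral.integral_comp_sub_right]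
  rw [hswap, ← Real.norm_eq_abs]
  exact intervalIntegral.norm_integral_le_of_norm_le_const fun s _ =>
    (norm_integral_le_integral_norm _).trans (integral_norm_comp_sub_mul_le hφ' hψ s)

section MinDiv

variable {a b : ℝ}

lemma MeasureTheory.IntegrableOn.integrable_comp_abs {E : Type*} [NormedAddCommGroup E]
    {f : ℝ → E} (hf : IntegrableOn f (Ioi 0)) : Integrable fun x => f |x| := by
  have hIoi : IntegrableOn (fun x => f |x|) (Ioi 0) :=
    hf.congr_fun (fun x hx => by simp [abs_of_pos (mem_Ioi.1 hx)]) measurableSet_Ioi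
  have hIic : IntegrableOn (fun x => f |x|) (Iic 0) := by
    have hneg : MeasurableEmbedding fun x : ℝ => -x := (Homeomorph.neg ℝ).measurableEmbedding
    rw [← Measure.map_neg_eq_self (volume : Measure ℝ), hneg.integrableOn_map_iff]
    simp_rw [Function.comp_def, abs_neg, neg_preimage, neg_Iic, neg_zero]
    exact Iff.mpr integrableOn_Ici_iff_integrableOn_Ioi hIoi
  simpa using hIic.union hIoi

lemma min_div_sq_eqOn_Ioc (hb : 0 < b) :
    EqOn (fun x => min b (a / x) ^ 2) (fun _ => b ^ 2) (Ioc 0 (a / b)) := by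
  rintro x ⟨hx, hxc⟩
  dsimp only
  rw [min_eq_left ((le_div_iff₀ hx).2 ((le_div_iff₀' hb).1 hxc))]

lemma min_div_sq_eqOn_Ioi (ha : 0 < a) (hb : 0 < b) :
    EqOn (fun x => min b (a / x) ^ 2) (fun x => a ^ 2 * x ^ (-2 : ℝ)) (Ioi (a / b)) := by
  intro x hx
  have hx0 : 0 < x := (div_pos ha hb).trans hx
  dsimp only
  rw [min_eq_right ((div_le_iff₀ hx0).2 ((div_lt_iff₀' hb).1 hx).le), Real.rpow_neg hx0.le,
    Real.rpow_two, div_pow, div_eq_mul_inv]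

lemma integrableOn_Ioi_min_div_sq (ha : 0 < a) (hb : 0 < b) :
    IntegrableOn (fun x => min b (a / x) ^ 2) (Ioi 0) := by
  rw [← Ioc_union_Ioi_eq_Ioi (div_pos ha hb).le]
  refine IntegrableOn.union ?_ ?_
  · exact (integrableOn_const (C := b ^ 2) measure_Ioc_lt_top.ne).congr_fun
      (min_div_sq_eqOn_Ioc hb).symm measurableSet_Ioc
  · exact IntegrableOn.congr_fun
      ((integrableOn_Ioi_rpow_of_lt (a := -2) (by norm_num) (div_pos ha hb)).const_mul (a ^ 2))
      (min_div_sq_eqOn_Ioi ha hb).symm measurableSet_Ioi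

lemma integral_Ioi_min_div_sq (ha : 0 < a) (hb : 0 < b) :
    ∫ x in Ioi 0, min b (a / x) ^ 2 = 2 * a * b := by
  have hc : 0 < a / b := div_pos ha hb
  have hint := integrableOn_Ioi_min_div_sq ha hb
  rw [← Ioc_union_Ioi_eq_Ioi hc.le, setIntegral_union (Ioc_disjoint_Ioi le_rfl) measurableSet_Ioi
      (hint.mono_set Ioc_subset_Ioi_self) (hint.mono_set (Ioi_subset_Ioi hc.le)),
    setIntegral_congr_fun measurableSet_Ioc (min_div_sq_eqOn_Ioc hb),
    setIntegral_congr_fun measurableSet_Ioi (min_div_sq_eqOn_Ioi ha hb), setIntegral_const,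
    integral_const_mul, integral_Ioi_rpow_of_lt (by norm_num) hc,
    Real.volume_real_Ioc_of_le hc.le]
  norm_num [Real.rpow_neg_one]
  field_simp
  ring

lemma integrable_min_div_abs_sq (ha : 0 ≤ a) (hb : 0 ≤ b) :
    Integrable fun x : ℝ => min b (a / |x|) ^ 2 := by
  obtain rfl | ha := ha.eq_or_lt
  · simp [min_eq_right hb]
  obtain rfl | hb := hb.eq_or_lt
  · simp [min_eq_left (div_nonneg ha.le (abs_nonneg _))]
  exact (integrableOn_Ioi_min_div_sq ha hb).integrable_comp_abs

lemma integral_min_div_abs_sq (ha : 0 ≤ a) (hb : 0 ≤ b) :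
    ∫ x : ℝ, min b (a / |x|) ^ 2 = 4 * a * b := by
  obtain rfl | ha := ha.eq_or_lt
  · simp [min_eq_right hb]
  obtain rfl | hb := hb.eq_or_lt
  · simp [min_eq_left (div_nonneg ha.le (abs_nonneg _))]
  rw [integral_comp_abs (f := fun x => min b (a / x) ^ 2), integral_Ioi_min_div_sq ha hb]
  ring

lemma memLp_min_div_abs (ha : 0 ≤ a) (hb : 0 ≤ b) :
    MemLp (fun x : ℝ => min b (a / |x|)) 2 volume :=
  (memLp_two_iff_integrable_sq (Measurable.aestronglyMeasurable (by fun_prop))).2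
    (integrable_min_div_abs_sq ha hb)

lemma eLpNorm_min_div_abs (ha : 0 ≤ a) (hb : 0 ≤ b) :
    eLpNorm (fun x : ℝ => min b (a / |x|)) 2 volume = ENNReal.ofReal (2 * √(a * b)) := by
  rw [(memLp_min_div_abs ha hb).eLpNorm_two_eq_ofReal_sqrt_integral_sq,
    integral_min_div_abs_sq ha hb, show 4 * a * b = 2 ^ 2 * (a * b) by ring,
    Real.sqrt_mul (by norm_num), Real.sqrt_sq (by norm_num)]

end MinDiv

lemma abs_sub_div_le_min {a b x M L : ℝ} (hL : 0 ≤ L) (ha : |a| ≤ M) (hb : |b| ≤ M)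
    (hab : |a - b| ≤ L * |x|) : |(a - b) / x| ≤ min L (2 * M / |x|) := by
  rcases eq_or_ne x 0 with rfl | hx
  · simp [hL]
  have hx' : 0 < |x| := abs_pos.2 hx
  rw [abs_div, le_min_iff, div_le_iff₀ hx', div_le_div_iff_of_pos_right hx']
  exact ⟨hab, (abs_sub _ _).trans (by linarith)⟩

lemma memLp_slope_zero_and_eLpNorm_le {C : ℝ → ℝ} {M L : ℝ} (hM : ∀ x, |C x| ≤ M)
    (hL : ∀ x z, |C x - C z| ≤ L * |x - z|) :
    MemLp (slope C 0) 2 volume ∧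
      eLpNorm (slope C 0) 2 volume ≤ ENNReal.ofReal (2 * √(2 * M * L)) := by
  have hL0 : 0 ≤ L := by simpa using (abs_nonneg _).trans (hL 1 0)
  have hM0 : 0 ≤ M := (abs_nonneg _).trans (hM 0)
  have hmeas : Measurable (slope C 0) := by
    rw [slope_fun_def_field]
    exact ((LipschitzWith.of_dist_le' hL).continuous.measurable.sub_const _).div
      (measurable_id.sub_const _)
  have hbound : ∀ x, ‖slope C 0 x‖ ≤ ‖min L (2 * M / |x|)‖ := fun x => by
    rw [slope_def_field, sub_zero, Real.norm_eq_abs]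
    exact (abs_sub_div_le_min hL0 (hM x) (hM 0) (by simpa using hL x 0)).trans (le_abs_self _)
  have hM2 : 0 ≤ 2 * M := by positivity
  refine ⟨(memLp_min_div_abs hM2 hL0).of_le hmeas.aestronglyMeasurable (.of_forall hbound), ?_⟩
  exact (eLpNorm_mono hbound).trans_eq (eLpNorm_min_div_abs hM2 hL0)

lemma integral_comp_sub_sub_div_mul_eq_slope {φ ψ : ℝ → ℝ} (hφ : MemLp φ 2 volume)
    (hψ : MemLp ψ 2 volume) (x : ℝ) :
    ∫ y, (φ (x - y) - φ (-y)) / x * ψ y = slope (fun c => ∫ y, φ (c - y) * ψ y) 0 x := by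
  have hint : ∀ c, Integrable (fun y => φ (c - y) * ψ y) :=
    fun c => (hφ.comp_sub_left c).integrable_mul hψ
  rw [slope_def_field, sub_zero, ← integral_sub (hint x) (hint 0), ← integral_div]
  congr 1 with y
  rw [zero_sub]
  ring

/-- If `K ∈ H¹(ℝ)` (i.e. `K ∈ L²` with weak derivative `K' ∈ L²`, expressed via
absolute continuity), then the operator
`(B₄ u)(x) = ∫ (K(x-x') - K(-x'))/x ⬝ u(x') dx'` maps `L²(ℝ)` into `L²(ℝ)` with
norm at most `2√2 ⬝ ‖K‖_{H¹}`, where `‖K‖_{H¹}² = ‖K‖_{L²}² + ‖K'‖_{L²}²`. -/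
theorem stmt3 (K K' : ℝ → ℝ)
    (hK : MemLp K 2 volume) (hK' : MemLp K' 2 volume)
    (hweak : ∀ x y : ℝ, K y - K x = ∫ t in x..y, K' t) :
    ∀ u : ℝ → ℝ, MemLp u 2 volume →
      MemLp (fun x : ℝ => ∫ x' : ℝ, (K (x - x') - K (-x')) / x * u x') 2 volume ∧
      eLpNorm (fun x : ℝ => ∫ x' : ℝ, (K (x - x') - K (-x')) / x * u x') 2 volume ≤
        ENNReal.ofReal (2 * Real.sqrt 2 *
            Real.sqrt ((eLpNorm K 2 volume).toReal ^ 2 + (eLpNorm K' 2 volume).toReal ^ 2)) *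
          eLpNorm u 2 volume := by
  intro u hu
  set A := (eLpNorm K 2 volume).toReal
  set B := (eLpNorm K' 2 volume).toReal
  set U := (eLpNorm u 2 volume).toReal
  obtain ⟨hmem, hnorm⟩ := memLp_slope_zero_and_eLpNorm_le
    (abs_integral_comp_sub_mul_le hK hu) (abs_integral_comp_sub_mul_sub_le hK hK' hu hweak)
  simp only [integral_comp_sub_sub_div_mul_eq_slope hK hu]
  have hU : 0 ≤ U := ENNReal.toReal_nonneg
  have harith : 2 * √(2 * (A * U) * (B * U)) ≤ 2 * √2 * √(A ^ 2 + B ^ 2) * U := by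
    rw [show 2 * (A * U) * (B * U) = 2 * (A * B) * U ^ 2 by ring, Real.sqrt_mul' _ (sq_nonneg U),
      Real.sqrt_sq hU, Real.sqrt_mul zero_le_two]
    have hAB : √(A * B) ≤ √(A ^ 2 + B ^ 2) := Real.sqrt_le_sqrt (by nlinarith [sq_nonneg (A - B)])
    calc 2 * (√2 * √(A * B) * U) = 2 * √2 * √(A * B) * U := by ring
      _ ≤ 2 * √2 * √(A ^ 2 + B ^ 2) * U := by gcongr
  refine ⟨hmem, hnorm.trans ((ENNReal.ofReal_le_ofReal harith).trans_eq ?_)⟩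
  rw [ENNReal.ofReal_mul (by positivity), ENNReal.ofReal_toReal hu.2.ne]
end

section
/- Suppose K : ℝ → ℝ has weak derivative D¹K ∈ L²(ℝ) that is Lipschitz continuous with constant k₂. Then h(x) = ∫₀^∞ (K(x-x') - K(x+x'))/x' dx' is Lipschitz continuous with Lipschitz constant 2(k₂ + ‖D¹K‖_{L²}). -/
/-!
By the fundamental theorem of calculus, `h x₂ - h x₁` is the integral over `t ∈ (x₁, x₂]` of
`∫₀^∞ (K'(t - y) - K'(t + y)) / y dy`, so by Tonelli it suffices to bound
`∫₀^∞ |K'(t - y) - K'(t + y)| / y dy` by `2 (k₂ + ‖K'‖₂)` uniformly in `t`. On `(0, 1]` the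
Lipschitz bound `|K'(t - y) - K'(t + y)| ≤ 2 k₂ y` gives `2 k₂`; on `(1, ∞)` Cauchy–Schwarz against
`1/y`, whose `L²(1, ∞)` norm is `1`, bounds each of the two terms by `‖K'‖₂`. Since this bounds
the integral of the absolute difference of the two integrands, it also covers the case where both
integrals defining `h` diverge (and are `0` by convention).
-/

open MeasureTheory Set

theorem enorm_integral_sub_integral_le {α E : Type*} [MeasurableSpace α] {μ : Measure α}
    [NormedAddCommGroup E] [NormedSpace ℝ E] {f g : α → E}
    (hf : AEStronglyMeasurable f μ) (hg : AEStronglyMeasurable g μ) :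
    ‖∫ a, f a ∂μ - ∫ a, g a ∂μ‖ₑ ≤ ∫⁻ a, ‖f a - g a‖ₑ ∂μ := by
  by_cases hfg : Integrable (f - g) μ
  · by_cases hg' : Integrable g μ
    · have hf' : Integrable f μ := by simpa using hfg.add hg'
      rw [← integral_sub hf' hg']
      exact enorm_integral_le_lintegral_enorm _
    · have hf' : ¬ Integrable f μ := fun hf' => hg' (by simpa using hf'.sub hfg)
      simp [integral_undef hf', integral_undef hg']
  · have hinf : ∫⁻ a, ‖f a - g a‖ₑ ∂μ = ⊤ := by
      by_contra h
      exact hfg ⟨hf.sub hg, (hasFiniteIntegral_def _ _).2 (lt_top_iff_ne_top.2 h)⟩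
    simp [hinf]

theorem continuous_of_sub_eq_intervalIntegral {F f : ℝ → ℝ} (hf : Continuous f)
    (hF : ∀ a b, F b - F a = ∫ t in a..b, f t) : Continuous F := by
  have hrep : F = fun x => F 0 + ∫ t in (0 : ℝ)..x, f t := by
    funext x
    linarith [hF 0 x]
  rw [hrep]
  exact continuous_const.add (intervalIntegral.continuous_primitive hf.intervalIntegrable 0)

theorem eLpNorm_inv_Ioi_one : eLpNorm (fun x : ℝ => x⁻¹) 2 (volume.restrict (Ioi 1)) = 1 := by
  have hsq : ∫⁻ x in Ioi (1 : ℝ), ‖x⁻¹‖ₑ ^ (2 : ℝ) = 1 := by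
    have hpt : ∀ x ∈ Ioi (1 : ℝ), ‖x⁻¹‖ₑ ^ (2 : ℝ) = ENNReal.ofReal (x ^ (-2 : ℝ)) := by
      intro x hx
      have hx0 : 0 < x := one_pos.trans hx
      rw [Real.enorm_eq_ofReal_abs, abs_of_pos (inv_pos.2 hx0),
        ENNReal.ofReal_rpow_of_nonneg (inv_nonneg.2 hx0.le) (by norm_num),
        Real.inv_rpow hx0.le, ← Real.rpow_neg hx0.le]
    rw [setLIntegral_congr_fun measurableSet_Ioi hpt, ← ofReal_integral_eq_lintegral_ofReal
      (integrableOn_Ioi_rpow_of_lt (by norm_num) one_pos)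
      (ae_restrict_of_forall_mem measurableSet_Ioi fun x hx =>
        Real.rpow_nonneg (one_pos.trans hx).le _),
      integral_Ioi_rpow_of_lt (by norm_num) one_pos]
    norm_num
  rw [eLpNorm_eq_lintegral_rpow_enorm_toReal two_ne_zero ENNReal.ofNat_ne_top,
    ENNReal.toReal_ofNat, hsq, ENNReal.one_rpow]

theorem lintegral_Ioi_one_enorm_div_le_eLpNorm {g : ℝ → ℝ} (hg : AEStronglyMeasurable g) :
    ∫⁻ x in Ioi 1, ‖g x / x‖ₑ ≤ eLpNorm g 2 volume :=
  calc ∫⁻ x in Ioi 1, ‖g x / x‖ₑ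
      = eLpNorm ((fun x : ℝ => x⁻¹) • g) 1 (volume.restrict (Ioi 1)) := by
        simp [eLpNorm_one_eq_lintegral_enorm, div_eq_inv_mul]
    _ ≤ eLpNorm (fun x : ℝ => x⁻¹) 2 (volume.restrict (Ioi 1)) *
          eLpNorm g 2 (volume.restrict (Ioi 1)) :=
        eLpNorm_smul_le_mul_eLpNorm hg.restrict measurable_inv.aestronglyMeasurable
    _ ≤ eLpNorm g 2 volume := by
        rw [eLpNorm_inv_Ioi_one, one_mul]
        exact eLpNorm_mono_measure _ Measure.restrict_le_self

/-- `∫₀^∞ hilbertIntegrand F x y dy` is `π` times the Hilbert transform of `F` at `x`. -/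
noncomputable def hilbertIntegrand (F : ℝ → ℝ) (x y : ℝ) : ℝ := (F (x - y) - F (x + y)) / y

section hilbertIntegrand

variable {F f : ℝ → ℝ}

theorem lintegral_Ioc_zero_one_enorm_hilbertIntegrand_le {k : ℝ}
    (hf : ∀ a b, |f a - f b| ≤ k * |a - b|) (x : ℝ) :
    ∫⁻ y in Ioc 0 1, ‖hilbertIntegrand f x y‖ₑ ≤ ENNReal.ofReal (2 * k) :=
  calc ∫⁻ y in Ioc 0 1, ‖hilbertIntegrand f x y‖ₑ
      ≤ ∫⁻ y in Ioc (0 : ℝ) 1, ENNReal.ofReal (2 * k) := by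
        refine setLIntegral_mono measurable_const fun y hy => ?_
        rw [Real.enorm_eq_ofReal_abs]
        refine ENNReal.ofReal_le_ofReal ?_
        rw [hilbertIntegrand, abs_div, abs_of_pos hy.1, div_le_iff₀ hy.1]
        calc |f (x - y) - f (x + y)| ≤ k * |(x - y) - (x + y)| := hf _ _
          _ = 2 * k * y := by
            rw [show (x - y) - (x + y) = -(2 * y) by ring, abs_neg, abs_of_pos (by linarith [hy.1])]
            ring
    _ = ENNReal.ofReal (2 * k) := by simp

theorem lintegral_Ioi_one_enorm_hilbertIntegrand_le (hf : AEStronglyMeasurable f) (x : ℝ) :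
    ∫⁻ y in Ioi 1, ‖hilbertIntegrand f x y‖ₑ ≤ 2 * eLpNorm f 2 volume := by
  have hsub := Measure.measurePreserving_sub_left volume x
  have hadd := measurePreserving_add_left volume x
  calc ∫⁻ y in Ioi 1, ‖hilbertIntegrand f x y‖ₑ
      ≤ ∫⁻ y in Ioi 1, (‖f (x - y) / y‖ₑ + ‖f (x + y) / y‖ₑ) :=
        lintegral_mono fun y => by rw [hilbertIntegrand, sub_div]; exact enorm_sub_le
    _ = (∫⁻ y in Ioi 1, ‖f (x - y) / y‖ₑ) + ∫⁻ y in Ioi 1, ‖f (x + y) / y‖ₑ :=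
        lintegral_add_left'
          ((hf.comp_measurePreserving hsub).aemeasurable.div aemeasurable_id).enorm.restrict _
    _ ≤ eLpNorm (f ∘ fun y => x - y) 2 volume + eLpNorm (f ∘ fun y => x + y) 2 volume :=
        add_le_add (lintegral_Ioi_one_enorm_div_le_eLpNorm (hf.comp_measurePreserving hsub))
          (lintegral_Ioi_one_enorm_div_le_eLpNorm (hf.comp_measurePreserving hadd))
    _ = 2 * eLpNorm f 2 volume := by
        rw [eLpNorm_comp_measurePreserving hf hsub, eLpNorm_comp_measurePreserving hf hadd,
          two_mul]

theorem lintegral_Ioi_enorm_hilbertIntegrand_le {k : ℝ}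
    (hf : ∀ a b, |f a - f b| ≤ k * |a - b|) (x : ℝ) :
    ∫⁻ y in Ioi 0, ‖hilbertIntegrand f x y‖ₑ ≤ ENNReal.ofReal (2 * k) + 2 * eLpNorm f 2 volume := by
  rw [← Ioc_union_Ioi_eq_Ioi zero_le_one, lintegral_union measurableSet_Ioi Ioc_disjoint_Ioi_same]
  exact add_le_add (lintegral_Ioc_zero_one_enorm_hilbertIntegrand_le hf x)
    (lintegral_Ioi_one_enorm_hilbertIntegrand_le
      (LipschitzWith.of_dist_le' hf).continuous.aestronglyMeasurable x)

theorem measurable_uncurry_hilbertIntegrand (hF : Continuous F) :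
    Measurable (Function.uncurry (hilbertIntegrand F)) := by
  unfold hilbertIntegrand
  fun_prop

theorem hilbertIntegrand_sub_eq_integral (hf : Continuous f)
    (hF : ∀ a b, F b - F a = ∫ t in a..b, f t) {x₁ x₂ : ℝ} (h : x₁ ≤ x₂) (y : ℝ) :
    hilbertIntegrand F x₂ y - hilbertIntegrand F x₁ y =
      ∫ t in Ioc x₁ x₂, hilbertIntegrand f t y := by
  have hsub : IntervalIntegrable (fun t => f (t - y)) volume x₁ x₂ :=
    (hf.comp (continuous_sub_right y)).intervalIntegrable _ _
  have hadd : IntervalIntegrable (fun t => f (t + y)) volume x₁ x₂ :=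
    (hf.comp (continuous_add_const y)).intervalIntegrable _ _
  simp only [hilbertIntegrand]
  rw [integral_div, ← intervalIntegral.integral_of_le h, intervalIntegral.integral_sub hsub hadd,
    intervalIntegral.integral_comp_sub_right f y, intervalIntegral.integral_comp_add_right f y,
    ← hF, ← hF]
  ring

theorem lintegral_Ioi_enorm_hilbertIntegrand_sub_le (hf : Continuous f)
    (hF : ∀ a b, F b - F a = ∫ t in a..b, f t) {x₁ x₂ : ℝ} (h : x₁ ≤ x₂) {C : ENNReal}
    (hC : ∀ t, ∫⁻ y in Ioi 0, ‖hilbertIntegrand f t y‖ₑ ≤ C) :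
    ∫⁻ y in Ioi 0, ‖hilbertIntegrand F x₂ y - hilbertIntegrand F x₁ y‖ₑ ≤
      ENNReal.ofReal (x₂ - x₁) * C :=
  calc ∫⁻ y in Ioi 0, ‖hilbertIntegrand F x₂ y - hilbertIntegrand F x₁ y‖ₑ
      ≤ ∫⁻ y in Ioi 0, ∫⁻ t in Ioc x₁ x₂, ‖hilbertIntegrand f t y‖ₑ := lintegral_mono fun y => by
        rw [hilbertIntegrand_sub_eq_integral hf hF h]
        exact enorm_integral_le_lintegral_enorm _
    _ = ∫⁻ t in Ioc x₁ x₂, ∫⁻ y in Ioi 0, ‖hilbertIntegrand f t y‖ₑ :=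
        lintegral_lintegral_swap
          ((measurable_uncurry_hilbertIntegrand hf).comp measurable_swap).enorm.aemeasurable
    _ ≤ ∫⁻ _ in Ioc x₁ x₂, C := lintegral_mono hC
    _ = ENNReal.ofReal (x₂ - x₁) * C := by rw [setLIntegral_const, Real.volume_Ioc, mul_comm]

end hilbertIntegrand

/-- If `K : ℝ → ℝ` has weak derivative `K' ∈ L²(ℝ)` (expressed via absolute
continuity) which is Lipschitz with constant `k₂`, then
`h(x) = ∫₀^∞ (K(x-x') - K(x+x'))/x' dx'` is Lipschitz with constant
`2 (k₂ + ‖K'‖_{L²})`. -/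
theorem stmt5 (K K' : ℝ → ℝ) (k₂ : ℝ)
    (hK' : MemLp K' 2 volume)
    (hweak : ∀ x y : ℝ, K y - K x = ∫ t in x..y, K' t)
    (hLip : ∀ a b : ℝ, |K' a - K' b| ≤ k₂ * |a - b|) :
    ∀ x₁ x₂ : ℝ,
      |(∫ x' in Set.Ioi (0:ℝ), (K (x₂ - x') - K (x₂ + x')) / x') -
          ∫ x' in Set.Ioi (0:ℝ), (K (x₁ - x') - K (x₁ + x')) / x'| ≤
        2 * (k₂ + (eLpNorm K' 2 volume).toReal) * |x₂ - x₁| := by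
  have hk₂ : 0 ≤ k₂ := (abs_nonneg _).trans (by simpa using hLip 0 1)
  have hK'cont : Continuous K' := (LipschitzWith.of_dist_le' hLip).continuous
  have hKcont : Continuous K := continuous_of_sub_eq_intervalIntegral hK'cont hweak
  have hK_meas (x : ℝ) : AEStronglyMeasurable (hilbertIntegrand K x) (volume.restrict (Ioi 0)) :=
    ((measurable_uncurry_hilbertIntegrand hKcont).comp measurable_prodMk_left).aestronglyMeasurable
  intro x₁ x₂
  wlog hle : x₁ ≤ x₂ generalizing x₁ x₂
  · rw [abs_sub_comm, abs_sub_comm x₂]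
    exact this x₂ x₁ (le_of_not_ge hle)
  change |(∫ y in Ioi 0, hilbertIntegrand K x₂ y) - ∫ y in Ioi 0, hilbertIntegrand K x₁ y| ≤ _
  have hbound := (enorm_integral_sub_integral_le (hK_meas x₂) (hK_meas x₁)).trans
    (lintegral_Ioi_enorm_hilbertIntegrand_sub_le hK'cont hweak hle
      (lintegral_Ioi_enorm_hilbertIntegrand_le hLip))
  obtain ⟨N, hN0, hN⟩ : ∃ N, 0 ≤ N ∧ eLpNorm K' 2 volume = ENNReal.ofReal N :=
    ⟨_, ENNReal.toReal_nonneg, (ENNReal.ofReal_toReal hK'.eLpNorm_ne_top).symm⟩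
  rw [hN, ← ENNReal.ofReal_ofNat 2, ← ENNReal.ofReal_mul zero_le_two,
    ← ENNReal.ofReal_add (by positivity) (by positivity), ← ENNReal.ofReal_mul (sub_nonneg.2 hle),
    Real.enorm_eq_ofReal_abs, ENNReal.ofReal_le_ofReal_iff (by positivity)] at hbound
  rw [hN, ENNReal.toReal_ofReal hN0, abs_of_nonneg (sub_nonneg.2 hle)]
  linarith
end

section
/- Let V(x) = exp(-x²/2). Then the Wigner potential V_w(x,v) = (i/2π)∫exp(ivy)[V(x+y/2) - V(x-y/2)]dy equals √(8/π)·exp(-2v²)·sin(2vx). -/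
/-!
Writing `V(x - y/2) = V(-x + y/2)`, both halves of the integrand are Fourier integrals of the
shifted Gaussian `y ↦ exp(-(a + y/2)²/2)` with `a = ±x`. Each is a complex Gaussian integral
`∫ exp(-b y² + c y + d) dy = √(π/b) exp(d + c²/(4b))`, which gives
`√(8π) exp(-2v²) exp(-2iva)`, and the difference of the two phases `a = x, -x` is `-2i sin(2vx)`.
-/

open Complex MeasureTheory

lemma Real.sqrt_mul_eq_sqrt_div_mul_self {a b : ℝ} (hb : 0 ≤ b) :
    Real.sqrt (a * b) = Real.sqrt (a / b) * b :=
  calc Real.sqrt (a * b) = Real.sqrt (a / b * b ^ 2) := by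
        rcases hb.eq_or_lt with rfl | hb
        · simp
        · field_simp
    _ = Real.sqrt (a / b) * b := by rw [Real.sqrt_mul' _ (sq_nonneg b), Real.sqrt_sq hb]

lemma cexp_mul_gaussian_half_shift_eq (v a y : ℝ) :
    cexp (I * v * y) * (Real.exp (-(a + y / 2) ^ 2 / 2) : ℂ) =
      cexp (-(1 / 8) * y ^ 2 + (I * v - a / 2) * y + -a ^ 2 / 2) := by
  rw [ofReal_exp, ← Complex.exp_add]
  congr 1
  push_cast
  ring

lemma integrable_cexp_mul_gaussian_half_shift (v a : ℝ) :
    Integrable fun y : ℝ ↦ cexp (I * v * y) * (Real.exp (-(a + y / 2) ^ 2 / 2) : ℂ) := by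
  simp_rw [cexp_mul_gaussian_half_shift_eq]
  exact integrable_cexp_quadratic' (by norm_num) _ _

lemma integral_cexp_mul_gaussian_half_shift (v a : ℝ) :
    ∫ y : ℝ, cexp (I * v * y) * (Real.exp (-(a + y / 2) ^ 2 / 2) : ℂ) =
      Real.sqrt (8 * Real.pi) * Real.exp (-2 * v ^ 2) * cexp (-(2 * v * a) * I) := by
  simp_rw [cexp_mul_gaussian_half_shift_eq]
  have hsqrt : ((Real.pi : ℂ) / -(-(1 / 8))) ^ (1 / 2 : ℂ) = Real.sqrt (8 * Real.pi) := by
    rw [Real.sqrt_eq_rpow, ofReal_cpow (by positivity)]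
    push_cast
    ring_nf
  rw [integral_cexp_quadratic (by norm_num), hsqrt, mul_assoc, ofReal_exp, ← Complex.exp_add]
  congr 2
  push_cast
  linear_combination (2 * (v : ℂ) ^ 2) * I_sq

/-- For the Gaussian potential `V(x) = exp(-x²/2)`, the Wigner potential
`V_w(x,v) = (i/2π) ∫ e^{ivy} [V(x+y/2) - V(x-y/2)] dy` equals
`√(8/π) exp(-2v²) sin(2vx)`. -/
theorem stmt17 (x v : ℝ) :
    (Complex.I / (2 * Real.pi)) *
        ∫ y : ℝ, Complex.exp (Complex.I * v * y) *
          ((Real.exp (-(x + y / 2) ^ 2 / 2) : ℂ) - (Real.exp (-(x - y / 2) ^ 2 / 2) : ℂ)) =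
      (Real.sqrt (8 / Real.pi) * Real.exp (-2 * v ^ 2) * Real.sin (2 * v * x) : ℝ) := by
  have hV_even (y : ℝ) : (x - y / 2) ^ 2 = (-x + y / 2) ^ 2 := by ring
  simp_rw [hV_even, mul_sub]
  rw [integral_sub (integrable_cexp_mul_gaussian_half_shift v x)
      (integrable_cexp_mul_gaussian_half_shift v (-x)),
    integral_cexp_mul_gaussian_half_shift, integral_cexp_mul_gaussian_half_shift,
    Real.sqrt_mul_eq_sqrt_div_mul_self Real.pi_pos.le]
  have hsin := Complex.two_sin (2 * v * x)
  have hπ : (Real.pi : ℂ) ≠ 0 := ofReal_ne_zero.mpr Real.pi_ne_zero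
  push_cast at hsin ⊢
  rw [mul_neg, neg_neg, div_mul_eq_mul_div, div_eq_iff (mul_ne_zero two_ne_zero hπ)]
  linear_combination -(Real.sqrt (8 / Real.pi) * Real.pi * cexp (-2 * v ^ 2)) * hsin
end
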